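/- Let B be the set of all 2^7 even-weight words of F_2^8 and let C ⊆ B be an (8,16,4)-code all of whose words have even weight. Then for the set L = {(x, y, y+z) : x, y ∈ B, z ∈ C} ⊆ F_2^24 (concatenation of three length-8 blocks, addition in F_2^8), which consists of even-weight words, the characteristic function χ_L is a perfect 2-coloring of the even-weight component of HH(24) with parameters ((28, 248)(8, 268)). -/

import Mathlib

/-- Binary words of length `n`. -/
abbrev Word (n : ℕ) := Fin n → ZMod 2

/-- The even-weight words of `F_2^n`. -/
def evenWords (n : ℕ) : Set (Word n) := {v | Even (hammingDist v 0)}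

/-- `χ_C` is a perfect 2-coloring with parameters `((a,b)(c,d))` of the graph with vertex set
`V ⊆ F_2^n` in which two words are adjacent iff their Hamming distance is exactly 2:
`C ⊆ V`, both colors occur, every vertex of `C` has exactly `a` neighbors in `C` and
`b` neighbors outside `C`, and every vertex of `V \ C` has exactly `c` neighbors in `C` and
`d` neighbors outside `C`. -/
def IsPerfect2Coloring {n : ℕ} (V C : Set (Word n)) (a b c d : ℕ) : Prop :=
  C ⊆ V ∧ C.Nonempty ∧ (V \ C).Nonempty ∧
  (∀ v ∈ C,
    {w | w ∈ V ∧ hammingDist v w = 2 ∧ w ∈ C}.ncard = a ∧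
    {w | w ∈ V ∧ hammingDist v w = 2 ∧ w ∉ C}.ncard = b) ∧
  (∀ v ∈ V \ C,
    {w | w ∈ V ∧ hammingDist v w = 2 ∧ w ∈ C}.ncard = c ∧
    {w | w ∈ V ∧ hammingDist v w = 2 ∧ w ∉ C}.ncard = d)

/-- Concatenation of three length-8 blocks into a word of length 24. -/
def cat3 (u v w : Word 8) : Word 24 := Fin.append (Fin.append u v) w

/-- An `(n,M,d)`-code: a set of `M` binary words of length `n` whose pairwise Hamming
distances are all at least `d`. -/
def IsCode (n M d : ℕ) (C : Set (Word n)) : Prop :=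
  C.ncard = M ∧ ∀ u ∈ C, ∀ v ∈ C, u ≠ v → d ≤ hammingDist u v

/-!
Write a vertex as `v = (a, b, c)` and a neighbour as `v + (e₁, e₂, e₃)`, where
`wt e₁ + wt e₂ + wt e₃ = 2`. The neighbour lies in `L` iff `wt e₁ ≡ wt a`, `wt e₂ ≡ wt b (mod 2)`
and `s + e₂ + e₃ ∈ C` for `s = b + c`; as `v` is even, `wt s ≡ wt a`.

Because `8 · 16 = 2⁷` and `C` has minimum distance `≥ 3`, the balls of radius 1 around the
codewords partition the odd words: every odd word is at distance 1 from exactly one codeword.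
Double counting then shows that every even non-codeword is at distance 2 from exactly four
codewords. Running through the possible weight patterns of `(e₁, e₂, e₃)` gives `C(8,2) = 28`
neighbours in `L` when `v ∈ L` and `8` otherwise; the remaining ones among the `C(24,2) = 276`
even neighbours lie outside `L`.
-/

open Finset
open scoped symmDiff

theorem Finset.card_symmDiff_add_two_mul_card_inter {α : Type*} [DecidableEq α]
    (s t : Finset α) : #(s ∆ t) + 2 * #(s ∩ t) = #s + #t := by
  rw [symmDiff_def, sup_eq_union, card_union_of_disjoint disjoint_sdiff_sdiff,
    ← card_sdiff_add_card_inter s t, ← card_sdiff_add_card_inter t s, inter_comm t s]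
  ring

theorem Fin.append_add_append {α : Type*} [Add α] {m k : ℕ} (u x : Fin m → α)
    (v y : Fin k → α) : Fin.append u v + Fin.append x y = Fin.append (u + x) (v + y) := by
  funext i
  refine Fin.addCases (fun j => ?_) (fun j => ?_) i <;> simp

theorem hammingNorm_append {α : Type*} [Zero α] [DecidableEq α] {m k : ℕ} (u : Fin m → α)
    (v : Fin k → α) : hammingNorm (Fin.append u v) = hammingNorm u + hammingNorm v := by
  simp only [hammingNorm, card_filter, Fin.sum_univ_add, Fin.append_left, Fin.append_right]

theorem IsCode.eq_of_hammingDist_lt {n M d : ℕ} {C : Set (Word n)} (hC : IsCode n M d C)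
    {u v : Word n} (hu : u ∈ C) (hv : v ∈ C) (h : hammingDist u v < d) : u = v :=
  by_contra fun hne => (hC.2 u hu v hv hne).not_gt h

theorem isPerfect2Coloring_of_ncard {n k a c : ℕ} {V S : Set (Word n)} (hSV : S ⊆ V)
    (hS : S.Nonempty) (hVS : (V \ S).Nonempty)
    (hdeg : ∀ v ∈ V, {w | w ∈ V ∧ hammingDist v w = 2}.ncard = k)
    (hin : ∀ v ∈ S, {w | w ∈ V ∧ hammingDist v w = 2 ∧ w ∈ S}.ncard = a)
    (hout : ∀ v ∈ V \ S, {w | w ∈ V ∧ hammingDist v w = 2 ∧ w ∈ S}.ncard = c) :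
    IsPerfect2Coloring V S a (k - a) c (k - c) := by
  have hsplit (v : Word n) : {w | w ∈ V ∧ hammingDist v w = 2 ∧ w ∈ S}.ncard +
      {w | w ∈ V ∧ hammingDist v w = 2 ∧ w ∉ S}.ncard =
      {w | w ∈ V ∧ hammingDist v w = 2}.ncard := by
    rw [← Set.ncard_inter_add_ncard_sdiff_eq_ncard {w | w ∈ V ∧ hammingDist v w = 2} S]
    congr 2 <;> ext w <;>
      simp only [Set.mem_inter_iff, Set.mem_sdiff, Set.mem_ofPred_eq, and_assoc]
  refine ⟨hSV, hS, hVS, fun v hv => ⟨hin v hv, ?_⟩, fun v hv => ⟨hout v hv, ?_⟩⟩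
  · have := hsplit v; rw [hin v hv, hdeg v (hSV hv)] at this; omega
  · have := hsplit v; rw [hout v hv, hdeg v hv.1] at this; omega

namespace Word

variable {n : ℕ}

theorem add_cancel_left (u v : Word n) : u + (u + v) = v := by
  rw [← add_assoc, ZModModule.add_self, zero_add]

theorem hammingDist_eq_hammingNorm_add (u v : Word n) :
    hammingDist u v = hammingNorm (u + v) := by
  rw [hammingDist_eq_hammingNorm, ZModModule.neg_eq_self]

theorem hammingDist_self_add (u v : Word n) : hammingDist u (u + v) = hammingNorm v := by
  rw [hammingDist_eq_hammingNorm_add, add_cancel_left]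

theorem cast_hammingNorm (u : Word n) : (hammingNorm u : ZMod 2) = ∑ i, u i := by
  rw [hammingNorm, Finset.natCast_card_filter]
  refine Finset.sum_congr rfl fun i _ => ?_
  generalize u i = x
  revert x; decide

theorem hammingNorm_add_mod_two (u v : Word n) :
    hammingNorm (u + v) % 2 = (hammingNorm u + hammingNorm v) % 2 := by
  rw [← ZMod.natCast_eq_natCast_iff', Nat.cast_add, cast_hammingNorm, cast_hammingNorm,
    cast_hammingNorm, ← Finset.sum_add_distrib]
  rfl

theorem hammingDist_mod_two (u v : Word n) :
    hammingDist u v % 2 = (hammingNorm u + hammingNorm v) % 2 := by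
  rw [hammingDist_eq_hammingNorm_add, hammingNorm_add_mod_two]

theorem mem_evenWords {u : Word n} : u ∈ evenWords n ↔ hammingNorm u % 2 = 0 := by
  rw [evenWords, Set.mem_ofPred_eq, hammingDist_zero_right, Nat.even_iff]

def supp : Word n ≃ Finset (Fin n) where
  toFun u := {i | u i ≠ 0}
  invFun s i := if i ∈ s then 1 else 0
  left_inv u := by
    funext i
    simp only [Finset.mem_filter, Finset.mem_univ, true_and]
    generalize u i = x
    revert x; decide
  right_inv s := by ext i; simp

theorem card_supp (u : Word n) : #(supp u) = hammingNorm u := rfl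

theorem supp_add (u v : Word n) : supp (u + v) = supp u ∆ supp v := by
  ext i
  simp only [supp, Equiv.coe_fn_mk, Finset.mem_symmDiff, Finset.mem_filter, Finset.mem_univ,
    true_and, Pi.add_apply]
  generalize u i = x; generalize v i = y
  revert x y; decide

theorem ncard_setOf_supp (P : Finset (Fin n) → Prop) :
    {u : Word n | P (supp u)}.ncard = {s | P s}.ncard :=
  Set.ncard_preimage_of_injective_subset_range supp.injective fun s _ => supp.surjective s

theorem ncard_hammingNorm_eq (k : ℕ) : {u : Word n | hammingNorm u = k}.ncard = n.choose k := by
  simp_rw [← card_supp]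
  have : {s : Finset (Fin n) | #s = k} = ↑(powersetCard k (univ : Finset (Fin n))) := by
    ext; simp
  rw [ncard_setOf_supp (#· = k), this, Set.ncard_coe_finset, card_powersetCard, card_univ,
    Fintype.card_fin]

theorem exists_hammingNorm_eq_one (hn : 0 < n) : ∃ e : Word n, hammingNorm e = 1 :=
  Set.nonempty_of_ncard_ne_zero (s := {e : Word n | hammingNorm e = 1}) <| by
    rw [ncard_hammingNorm_eq, Nat.choose_one_right]; exact hn.ne'

theorem ncard_hammingNorm_eq_one_and_add {t : Word n} (ht : hammingNorm t = 2) :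
    {u : Word n | hammingNorm u = 1 ∧ hammingNorm (t + u) = 1}.ncard = 2 := by
  simp_rw [← card_supp, supp_add]
  rw [ncard_setOf_supp fun s => #s = 1 ∧ #(supp t ∆ s) = 1]
  have key : {s | #s = 1 ∧ #(supp t ∆ s) = 1} = ↑((supp t).powersetCard 1) := by
    ext s
    have hcard := card_symmDiff_add_two_mul_card_inter (supp t) s
    have hinter := card_le_card (inter_subset_right : supp t ∩ s ⊆ s)
    rw [card_supp, ht] at hcard
    simp only [Set.mem_ofPred_eq, mem_coe, mem_powersetCard]
    refine ⟨fun ⟨hs, hts⟩ => ⟨?_, hs⟩, fun ⟨hst, hs⟩ => ⟨hs, ?_⟩⟩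
    · rw [← inter_eq_right]
      exact eq_of_subset_of_card_le inter_subset_right (by omega)
    · rw [inter_eq_right.mpr hst] at hcard
      omega
  rw [key, Set.ncard_coe_finset, card_powersetCard, card_supp, ht]
  rfl

theorem ncard_hammingDist_eq_and (v : Word n) (k : ℕ) (S : Set (Word n)) :
    {w | hammingDist v w = k ∧ w ∈ S}.ncard = {e | hammingNorm e = k ∧ v + e ∈ S}.ncard := by
  have : {w | hammingDist v w = k ∧ w ∈ S} = (v + ·) '' {e | hammingNorm e = k ∧ v + e ∈ S} := by
    ext w
    refine ⟨fun ⟨hk, hw⟩ => ⟨v + w, ⟨?_, ?_⟩, add_cancel_left v w⟩, ?_⟩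
    · rwa [← hammingDist_eq_hammingNorm_add]
    · rwa [add_cancel_left]
    · rintro ⟨e, ⟨hk, he⟩, rfl⟩
      exact ⟨by rwa [hammingDist_self_add], he⟩
  rw [this, Set.ncard_image_of_injective _ (add_right_injective v)]

theorem ncard_evenWords_hammingDist_eq_two {v : Word n} (hv : v ∈ evenWords n) :
    {w | w ∈ evenWords n ∧ hammingDist v w = 2}.ncard = n.choose 2 := by
  have : {w | w ∈ evenWords n ∧ hammingDist v w = 2} =
      {w | hammingDist v w = 2 ∧ w ∈ Set.univ} := by
    ext w
    simp only [Set.mem_ofPred_eq, Set.mem_univ, and_true, and_iff_right_iff_imp]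
    intro hvw
    have := hammingDist_mod_two v w
    rw [mem_evenWords] at hv ⊢
    omega
  rw [this, ncard_hammingDist_eq_and]
  simpa using ncard_hammingNorm_eq (n := n) 2

theorem ncard_hammingNorm_mod_two_eq_one (hn : 0 < n) :
    {u : Word n | hammingNorm u % 2 = 1}.ncard = 2 ^ (n - 1) := by
  obtain ⟨e, he⟩ := exists_hammingNorm_eq_one hn
  have hswap : (· + e) '' {u : Word n | hammingNorm u % 2 = 0} =
      {u | hammingNorm u % 2 = 1} := by
    ext u
    simp only [Set.mem_image, Set.mem_ofPred_eq]
    constructor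
    · rintro ⟨v, hv, rfl⟩
      have := hammingNorm_add_mod_two v e
      omega
    · intro hu
      refine ⟨u + e, ?_, by rw [add_assoc, ZModModule.add_self, add_zero]⟩
      have := hammingNorm_add_mod_two u e
      omega
  have hunion : {u : Word n | hammingNorm u % 2 = 0} ∪ {u | hammingNorm u % 2 = 1} =
      Set.univ := by
    ext u; simp only [Set.mem_union, Set.mem_ofPred_eq, Set.mem_univ, iff_true]; omega
  have hdisj : Disjoint {u : Word n | hammingNorm u % 2 = 0} {u | hammingNorm u % 2 = 1} :=
    Set.disjoint_left.mpr fun u (h0 : _ = 0) (h1 : _ = 1) => by omega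
  have htotal := Set.ncard_union_eq hdisj
  rw [hunion, Set.ncard_univ, ← hswap,
    Set.ncard_image_of_injective _ (add_left_injective e)] at htotal
  rw [← hswap, Set.ncard_image_of_injective _ (add_left_injective e)]
  simp only [Nat.card_eq_fintype_card, Fintype.card_pi, ZMod.card, prod_const, card_univ,
    Fintype.card_fin] at htotal
  obtain ⟨m, rfl⟩ : ∃ m, n = m + 1 := ⟨n - 1, by omega⟩
  rw [pow_succ, Nat.add_sub_cancel] at *
  omega

variable {M d : ℕ} {C : Set (Word n)}

theorem existsUnique_mem_hammingDist_eq_one (hCB : C ⊆ evenWords n) (hC : IsCode n M d C)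
    (hd : 3 ≤ d) (hM : n * M = 2 ^ (n - 1)) {s : Word n} (hs : hammingNorm s % 2 = 1) :
    ∃! z, z ∈ C ∧ hammingDist s z = 1 := by
  have hn : 0 < n := Nat.pos_of_ne_zero fun h => by simp [h] at hM
  have hinj : Set.InjOn (fun p : Word n × Word n => p.1 + p.2)
      (C ×ˢ {u | hammingNorm u = 1}) := by
    rintro ⟨z, u⟩ ⟨hz, hu⟩ ⟨z', u'⟩ ⟨hz', hu'⟩ (h : z + u = z' + u')
    obtain rfl : z = z' := hC.eq_of_hammingDist_lt hz hz' <| by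
      calc hammingDist z z' ≤ hammingDist z (z + u) + hammingDist (z' + u') z' := by
            rw [h]; exact hammingDist_triangle _ _ _
        _ = 2 := by rw [hammingDist_comm (z' + u'), hammingDist_self_add,
              hammingDist_self_add, hu, hu']
        _ < d := by omega
    rw [add_left_cancel h]
  have hcover : (fun p : Word n × Word n => p.1 + p.2) '' (C ×ˢ {u | hammingNorm u = 1}) =
      {u | hammingNorm u % 2 = 1} := by
    refine Set.eq_of_subset_of_ncard_le ?_ ?_
    · rintro _ ⟨⟨z, u⟩, ⟨hz, hu : hammingNorm u = 1⟩, rfl⟩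
      have hz : hammingNorm z % 2 = 0 := mem_evenWords.mp (hCB hz)
      show hammingNorm (z + u) % 2 = 1
      rw [hammingNorm_add_mod_two]
      omega
    · rw [hinj.ncard_image, Set.ncard_prod, hC.1, ncard_hammingNorm_eq,
        ncard_hammingNorm_mod_two_eq_one hn, Nat.choose_one_right, ← hM, mul_comm]
  obtain ⟨⟨z, u⟩, ⟨hz, hu : hammingNorm u = 1⟩, hzu : z + u = s⟩ := hcover.symm.subset hs
  have hsz : hammingDist s z = 1 := by rw [← hzu, hammingDist_comm, hammingDist_self_add, hu]
  refine ⟨z, ⟨hz, hsz⟩, fun z' ⟨hz', hsz'⟩ => hC.eq_of_hammingDist_lt hz' hz ?_⟩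
  calc hammingDist z' z ≤ hammingDist z' s + hammingDist s z := hammingDist_triangle _ _ _
    _ < d := by rw [hammingDist_comm, hsz', hsz]; omega

theorem ncard_mem_hammingDist_eq_one (hCB : C ⊆ evenWords n) (hC : IsCode n M d C)
    (hd : 3 ≤ d) (hM : n * M = 2 ^ (n - 1)) {s : Word n} (hs : hammingNorm s % 2 = 1) :
    {z | z ∈ C ∧ hammingDist s z = 1}.ncard = 1 := by
  obtain ⟨z, hz, huniq⟩ := existsUnique_mem_hammingDist_eq_one hCB hC hd hM hs
  exact Set.ncard_eq_one.mpr ⟨z, Set.eq_singleton_iff_unique_mem.mpr ⟨hz, huniq⟩⟩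

theorem two_mul_ncard_mem_hammingDist_eq_two (hCB : C ⊆ evenWords n) (hC : IsCode n M d C)
    (hd : 3 ≤ d) (hM : n * M = 2 ^ (n - 1)) {s : Word n} (hs : hammingNorm s % 2 = 0)
    (hsC : s ∉ C) : 2 * {z | z ∈ C ∧ hammingDist s z = 2}.ncard = n := by
  classical
  let B : Finset (Word n) := {u | hammingNorm u = 1}
  let D : Finset (Word n) := {z | z ∈ C ∧ hammingDist s z = 2}
  have hB : #B = n := by
    rw [← Set.ncard_coe_finset, coe_filter]
    simpa using ncard_hammingNorm_eq (n := n) 1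
  have hD : {z | z ∈ C ∧ hammingDist s z = 2}.ncard = #D := by
    rw [← Set.ncard_coe_finset, coe_filter]; simp
  -- each `u ∈ B` is related to exactly one `z ∈ D`, each `z ∈ D` to exactly two `u ∈ B`
  have hcount := card_mul_eq_card_mul (fun u z => hammingDist (s + u) z = 1) (m := 1) (n := 2)
    (s := B) (t := D) ?_ ?_
  · rw [hD]; rw [hB] at hcount; omega
  · intro u hu
    have hu : hammingNorm u = 1 := (mem_filter.mp hu).2
    have hsu : hammingNorm (s + u) % 2 = 1 := by rw [hammingNorm_add_mod_two]; omega
    obtain ⟨z, ⟨hz, hsuz⟩, huniq⟩ := existsUnique_mem_hammingDist_eq_one hCB hC hd hM hsu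
    rw [card_eq_one]
    refine ⟨z, eq_singleton_iff_unique_mem.mpr ⟨?_, fun z' hz' => ?_⟩⟩
    · have hz2 : hammingDist s z ≤ 2 := calc
        hammingDist s z ≤ hammingDist s (s + u) + hammingDist (s + u) z :=
          hammingDist_triangle _ _ _
        _ = 2 := by rw [hammingDist_self_add, hu, hsuz]
      have hz0 : hammingDist s z ≠ 0 := hammingDist_ne_zero.mpr fun h => hsC (h ▸ hz)
      have hpar := hammingDist_mod_two s z
      have hzeven := mem_evenWords.mp (hCB hz)
      simp only [mem_bipartiteAbove, D, mem_filter, mem_univ, true_and]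
      exact ⟨⟨hz, by omega⟩, hsuz⟩
    · simp only [mem_bipartiteAbove, D, mem_filter, mem_univ, true_and] at hz'
      exact huniq z' ⟨hz'.1.1, hz'.2⟩
  · intro z hz
    have hsz : hammingNorm (s + z) = 2 := by
      rw [← hammingDist_eq_hammingNorm_add]; exact (mem_filter.mp hz).2.2
    refine Eq.trans ?_ (ncard_hammingNorm_eq_one_and_add hsz)
    rw [← Set.ncard_coe_finset]
    congr 1
    ext u
    simp [bipartiteBelow, B, hammingDist_eq_hammingNorm_add, add_right_comm]

theorem ncard_mem_hammingDist_eq_two_of_mem (hC : IsCode n M d C) (hd : 3 ≤ d) {s : Word n}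
    (hs : s ∈ C) : {z | z ∈ C ∧ hammingDist s z = 2}.ncard = 0 := by
  rw [Set.ncard_eq_zero, Set.eq_empty_iff_forall_notMem]
  rintro z ⟨hz, hsz⟩
  rw [hC.eq_of_hammingDist_lt hs hz (by omega), hammingDist_self] at hsz
  exact absurd hsz (by decide)

theorem setOf_mem_hammingDist_eq_zero (s : Word n) :
    {z | z ∈ C ∧ hammingDist s z = 0} = C ∩ {s} := by
  ext z; simp [eq_comm]

def weightPairs (C : Set (Word n)) (s : Word n) (k₁ k₂ : ℕ) : Set (Word n × Word n) :=
  {p | hammingNorm p.1 = k₁ ∧ hammingNorm p.2 = k₂ ∧ s + p.1 + p.2 ∈ C}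

theorem ncard_weightPairs_left (s : Word n) (k : ℕ) :
    (weightPairs C s k 0).ncard = {z | z ∈ C ∧ hammingDist s z = k}.ncard := by
  have : weightPairs C s k 0 = (fun z => (s + z, 0)) '' {z | z ∈ C ∧ hammingDist s z = k} := by
    ext ⟨e, e'⟩
    simp only [weightPairs, Set.mem_ofPred_eq, hammingNorm_eq_zero, Set.mem_image, Prod.mk.injEq]
    constructor
    · rintro ⟨he, rfl, hC⟩
      exact ⟨s + e, ⟨by simpa using hC, by rwa [hammingDist_self_add]⟩, add_cancel_left s e, rfl⟩
    · rintro ⟨z, ⟨hz, hsz⟩, rfl, rfl⟩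
      exact ⟨by rwa [← hammingDist_self_add s, add_cancel_left], rfl,
        by rwa [add_zero, ← add_assoc, ZModModule.add_self, zero_add]⟩
  rw [this, Set.ncard_image_of_injective _ fun z z' h => add_left_cancel (Prod.ext_iff.mp h).1]

theorem ncard_weightPairs_right (s : Word n) (k : ℕ) :
    (weightPairs C s 0 k).ncard = {z | z ∈ C ∧ hammingDist s z = k}.ncard := by
  rw [← ncard_weightPairs_left, ← Set.ncard_image_of_injective _ Prod.swap_injective]
  congr 1
  ext ⟨e, e'⟩
  simp [weightPairs, add_right_comm s e' e, and_left_comm]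

theorem ncard_weightPairs_one_one (hCB : C ⊆ evenWords n) (hC : IsCode n M d C) (hd : 3 ≤ d)
    (hM : n * M = 2 ^ (n - 1)) {s : Word n} (hs : hammingNorm s % 2 = 0) :
    (weightPairs C s 1 1).ncard = n := by
  have hunique : ∀ e : Word n, hammingNorm e = 1 →
      ∃! e', hammingNorm e' = 1 ∧ s + e + e' ∈ C := by
    intro e he
    have hse : hammingNorm (s + e) % 2 = 1 := by rw [hammingNorm_add_mod_two]; omega
    obtain ⟨z, ⟨hz, hsz⟩, huniq⟩ := existsUnique_mem_hammingDist_eq_one hCB hC hd hM hse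
    refine ⟨s + e + z, ⟨by rwa [← hammingDist_self_add, add_cancel_left], by
      rwa [add_cancel_left]⟩, fun e' ⟨he', hC'⟩ => ?_⟩
    rw [← huniq _ ⟨hC', by rwa [hammingDist_self_add]⟩, add_cancel_left]
  have hinj : Set.InjOn Prod.fst (weightPairs C s 1 1) := by
    rintro ⟨e, e'⟩ ⟨he, he', hC'⟩ ⟨f, f'⟩ ⟨-, hf', hCf⟩ (rfl : e = f)
    exact Prod.ext rfl ((hunique e he).unique ⟨he', hC'⟩ ⟨hf', hCf⟩)
  have himage : Prod.fst '' weightPairs C s 1 1 = {e | hammingNorm e = 1} := by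
    refine Set.Subset.antisymm (fun _ ⟨_, ⟨he, _⟩, h⟩ => h ▸ he) fun e he => ?_
    obtain ⟨e', ⟨he', hC'⟩, -⟩ := hunique e he
    exact ⟨(e, e'), ⟨he, he', hC'⟩, rfl⟩
  rw [← hinj.ncard_image, himage, ncard_hammingNorm_eq, Nat.choose_one_right]

/-- For `α = wt a % 2`, `β = wt b % 2` and `s = b + c`, these are the `(e₁, e₂, e₃)` for which
`(a + e₁, b + e₂, c + e₃)` is a neighbour of `(a, b, c)` lying in `L`. -/
def neighborTriples (C : Set (Word n)) (α β : ℕ) (s : Word n) :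
    Set (Word n × Word n × Word n) :=
  {e | hammingNorm e.1 + hammingNorm e.2.1 + hammingNorm e.2.2 = 2 ∧ hammingNorm e.1 % 2 = α ∧
    hammingNorm e.2.1 % 2 = β ∧ s + e.2.1 + e.2.2 ∈ C}

theorem neighborTriples_zero_zero (s : Word n) :
    neighborTriples C 0 0 s = {e | hammingNorm e = 2} ×ˢ weightPairs C s 0 0 ∪
      {e | hammingNorm e = 0} ×ˢ (weightPairs C s 2 0 ∪ weightPairs C s 0 2) := by
  ext ⟨e₁, e₂, e₃⟩
  simp only [neighborTriples, weightPairs, Set.mem_ofPred_eq, Set.mem_union, Set.mem_prod]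
  grind

theorem neighborTriples_zero_one (s : Word n) :
    neighborTriples C 0 1 s = {e | hammingNorm e = 0} ×ˢ weightPairs C s 1 1 := by
  ext ⟨e₁, e₂, e₃⟩
  simp only [neighborTriples, weightPairs, Set.mem_ofPred_eq, Set.mem_prod]
  grind

theorem neighborTriples_one_zero (s : Word n) :
    neighborTriples C 1 0 s = {e | hammingNorm e = 1} ×ˢ weightPairs C s 0 1 := by
  ext ⟨e₁, e₂, e₃⟩
  simp only [neighborTriples, weightPairs, Set.mem_ofPred_eq, Set.mem_prod]
  grind

theorem neighborTriples_one_one (s : Word n) :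
    neighborTriples C 1 1 s = {e | hammingNorm e = 1} ×ˢ weightPairs C s 1 0 := by
  ext ⟨e₁, e₂, e₃⟩
  simp only [neighborTriples, weightPairs, Set.mem_ofPred_eq, Set.mem_prod]
  grind

theorem ncard_neighborTriples_zero_zero (s : Word n) :
    (neighborTriples C 0 0 s).ncard =
      n.choose 2 * (C ∩ {s}).ncard + 2 * {z | z ∈ C ∧ hammingDist s z = 2}.ncard := by
  have hdisj₁ : Disjoint {e : Word n | hammingNorm e = 2} {e | hammingNorm e = 0} :=
    Set.disjoint_left.mpr fun e (h : _ = 2) (h' : _ = 0) => by omega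
  have hdisj₂ : Disjoint (weightPairs C s 2 0) (weightPairs C s 0 2) :=
    Set.disjoint_left.mpr fun p h h' => by have := h.1; have := h'.1; omega
  rw [neighborTriples_zero_zero, Set.ncard_union_eq (Set.disjoint_prod.mpr (.inl hdisj₁)),
    Set.ncard_prod, Set.ncard_prod, Set.ncard_union_eq hdisj₂, ncard_hammingNorm_eq,
    ncard_hammingNorm_eq, ncard_weightPairs_left, ncard_weightPairs_left, ncard_weightPairs_right,
    setOf_mem_hammingDist_eq_zero, Nat.choose_zero_right]
  ring

theorem ncard_neighborTriples_of_mem (hC : IsCode n M d C) (hd : 3 ≤ d) {s : Word n}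
    (hs : s ∈ C) : (neighborTriples C 0 0 s).ncard = n.choose 2 := by
  rw [ncard_neighborTriples_zero_zero, Set.inter_singleton_of_mem hs, Set.ncard_singleton,
    ncard_mem_hammingDist_eq_two_of_mem hC hd hs]
  ring

theorem ncard_neighborTriples_of_notMem (hCB : C ⊆ evenWords n) (hC : IsCode n M d C)
    (hd : 3 ≤ d) (hM : n * M = 2 ^ (n - 1)) {α β : ℕ} (hα : α < 2) (hβ : β < 2) {s : Word n}
    (hs : hammingNorm s % 2 = α) (hsC : ¬(α = 0 ∧ β = 0 ∧ s ∈ C)) :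
    (neighborTriples C α β s).ncard = n := by
  interval_cases α <;> interval_cases β
  · have hsC : s ∉ C := fun h => hsC ⟨rfl, rfl, h⟩
    rw [ncard_neighborTriples_zero_zero, Set.inter_singleton_eq_empty.mpr hsC, Set.ncard_empty,
      two_mul_ncard_mem_hammingDist_eq_two hCB hC hd hM hs hsC, mul_zero, zero_add]
  · rw [neighborTriples_zero_one, Set.ncard_prod, ncard_hammingNorm_eq, Nat.choose_zero_right,
      ncard_weightPairs_one_one hCB hC hd hM hs, one_mul]
  · rw [neighborTriples_one_zero, Set.ncard_prod, ncard_hammingNorm_eq, Nat.choose_one_right,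
      ncard_weightPairs_right, ncard_mem_hammingDist_eq_one hCB hC hd hM hs, mul_one]
  · rw [neighborTriples_one_one, Set.ncard_prod, ncard_hammingNorm_eq, Nat.choose_one_right,
      ncard_weightPairs_left, ncard_mem_hammingDist_eq_one hCB hC hd hM hs, mul_one]

end Word

theorem cat3_injective :
    Function.Injective fun t : Word 8 × Word 8 × Word 8 => cat3 t.1 t.2.1 t.2.2 := by
  rintro ⟨a, b, c⟩ ⟨x, y, z⟩ h
  have h₁ := (Fin.appendEquiv 16 8).injective (a₁ := (Fin.append a b, c))
    (a₂ := (Fin.append x y, z)) h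
  simp only [Prod.mk.injEq] at h₁
  have h₂ := (Fin.appendEquiv 8 8).injective (a₁ := (a, b)) (a₂ := (x, y)) h₁.1
  simp only [Prod.mk.injEq] at h₂
  rw [h₂.1, h₂.2, h₁.2]

theorem cat3_surjective :
    Function.Surjective fun t : Word 8 × Word 8 × Word 8 => cat3 t.1 t.2.1 t.2.2 := by
  intro w
  have hw := (Fin.append_castAdd_natAdd (m := 16) (n := 8) (f := w)).symm
  rw [← Fin.append_castAdd_natAdd (m := 8) (n := 8) (f := fun i => w (Fin.castAdd 8 i))] at hw
  exact ⟨(_, _, _), hw.symm⟩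

theorem hammingNorm_cat3 (a b c : Word 8) :
    hammingNorm (cat3 a b c) = hammingNorm a + hammingNorm b + hammingNorm c := by
  rw [cat3, hammingNorm_append, hammingNorm_append]

theorem cat3_add_cat3 (a b c x y z : Word 8) :
    cat3 a b c + cat3 x y z = cat3 (a + x) (b + y) (c + z) := by
  rw [cat3, cat3, cat3, Fin.append_add_append, Fin.append_add_append]

def setL (C : Set (Word 8)) : Set (Word 24) :=
  {w | ∃ x ∈ evenWords 8, ∃ y ∈ evenWords 8, ∃ z ∈ C, w = cat3 x y (y + z)}

theorem cat3_mem_setL {C : Set (Word 8)} {x y z : Word 8} :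
    cat3 x y z ∈ setL C ↔ x ∈ evenWords 8 ∧ y ∈ evenWords 8 ∧ y + z ∈ C := by
  constructor
  · rintro ⟨x', hx', y', hy', z', hz', h⟩
    have := cat3_injective (a₁ := (x, y, z)) (a₂ := (x', y', y' + z')) h
    simp only [Prod.mk.injEq] at this
    obtain ⟨rfl, rfl, rfl⟩ := this
    exact ⟨hx', hy', by rwa [Word.add_cancel_left]⟩
  · rintro ⟨hx, hy, hyz⟩
    exact ⟨x, hx, y, hy, y + z, hyz, by rw [Word.add_cancel_left]⟩

theorem setL_subset_evenWords {C : Set (Word 8)} (hCB : C ⊆ evenWords 8) :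
    setL C ⊆ evenWords 24 := by
  rintro _ ⟨x, hx, y, hy, z, hz, rfl⟩
  have hyz := Word.hammingNorm_add_mod_two y z
  have hz := Word.mem_evenWords.mp (hCB hz)
  rw [Word.mem_evenWords] at hx hy ⊢
  rw [hammingNorm_cat3]
  omega

theorem ncard_neighbors_mem_setL {C : Set (Word 8)} (hCB : C ⊆ evenWords 8) (a b c : Word 8) :
    {w | w ∈ evenWords 24 ∧ hammingDist (cat3 a b c) w = 2 ∧ w ∈ setL C}.ncard =
      (Word.neighborTriples C (hammingNorm a % 2) (hammingNorm b % 2) (b + c)).ncard := by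
  have hV : {w | w ∈ evenWords 24 ∧ hammingDist (cat3 a b c) w = 2 ∧ w ∈ setL C} =
      {w | hammingDist (cat3 a b c) w = 2 ∧ w ∈ setL C} := by
    ext w
    exact ⟨fun h => h.2, fun h => ⟨setL_subset_evenWords hCB h.2, h⟩⟩
  rw [hV, Word.ncard_hammingDist_eq_and, ← Set.ncard_preimage_of_injective_subset_range
    cat3_injective fun e _ => cat3_surjective e]
  congr 1
  ext ⟨x, y, z⟩
  simp only [Set.mem_preimage, Set.mem_ofPred_eq, Word.neighborTriples, hammingNorm_cat3,
    cat3_add_cat3, cat3_mem_setL, Word.mem_evenWords, add_add_add_comm b y c z, ← add_assoc]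
  have := Word.hammingNorm_add_mod_two a x
  have := Word.hammingNorm_add_mod_two b y
  constructor <;> rintro ⟨h, h₁, h₂, h₃⟩ <;> exact ⟨h, by omega, by omega, h₃⟩

theorem ncard_neighbors_mem_setL_of_mem {C : Set (Word 8)} (hCB : C ⊆ evenWords 8)
    (hC : IsCode 8 16 4 C) {v : Word 24} (hv : v ∈ setL C) :
    {w | w ∈ evenWords 24 ∧ hammingDist v w = 2 ∧ w ∈ setL C}.ncard = 28 := by
  obtain ⟨⟨a, b, c⟩, rfl : cat3 a b c = v⟩ := cat3_surjective v
  obtain ⟨ha, hb, hbc⟩ := cat3_mem_setL.mp hv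
  rw [ncard_neighbors_mem_setL hCB, Word.mem_evenWords.mp ha, Word.mem_evenWords.mp hb,
    Word.ncard_neighborTriples_of_mem hC (by norm_num) hbc]
  rfl

theorem ncard_neighbors_mem_setL_of_notMem {C : Set (Word 8)} (hCB : C ⊆ evenWords 8)
    (hC : IsCode 8 16 4 C) {v : Word 24} (hv : v ∈ evenWords 24 \ setL C) :
    {w | w ∈ evenWords 24 ∧ hammingDist v w = 2 ∧ w ∈ setL C}.ncard = 8 := by
  obtain ⟨⟨a, b, c⟩, rfl : cat3 a b c = v⟩ := cat3_surjective v
  obtain ⟨hv, hvL⟩ := hv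
  have hpar := Word.hammingNorm_add_mod_two b c
  rw [Word.mem_evenWords, hammingNorm_cat3] at hv
  rw [cat3_mem_setL, Word.mem_evenWords, Word.mem_evenWords] at hvL
  rw [ncard_neighbors_mem_setL hCB]
  exact Word.ncard_neighborTriples_of_notMem hCB hC (by norm_num) (by norm_num)
    (Nat.mod_lt _ two_pos) (Nat.mod_lt _ two_pos) (by omega) hvL

/-- For `B` the set of all even-weight words of `F_2^8` and `C ⊆ B` an `(8,16,4)`-code of
even-weight words, the set `L = {(x, y, y+z) : x, y ∈ B, z ∈ C}` gives a perfect 2-coloring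
of the even-weight component of `HH(24)` with parameters `((28, 248)(8, 268))`. -/
theorem L_perfect_coloring (C : Set (Word 8))
    (hCB : C ⊆ evenWords 8) (hC : IsCode 8 16 4 C) :
    IsPerfect2Coloring (evenWords 24)
      {w | ∃ x ∈ evenWords 8, ∃ y ∈ evenWords 8, ∃ z ∈ C, w = cat3 x y (y + z)}
      28 248 8 268 := by
  obtain ⟨z, hz⟩ : C.Nonempty := Set.nonempty_of_ncard_ne_zero (by rw [hC.1]; decide)
  obtain ⟨e, he⟩ := Word.exists_hammingNorm_eq_one (n := 8) (by decide)
  have h0 : (0 : Word 8) ∈ evenWords 8 := by simp [Word.mem_evenWords]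
  have he' : e ∉ evenWords 8 := by simp [Word.mem_evenWords, he]
  exact isPerfect2Coloring_of_ncard (k := 276) (setL_subset_evenWords hCB)
    ⟨cat3 0 0 z, cat3_mem_setL.mpr ⟨h0, h0, by rwa [zero_add]⟩⟩
    ⟨cat3 e e 0, by simp [Word.mem_evenWords, hammingNorm_cat3, he],
      fun h => he' (cat3_mem_setL.mp h).1⟩
    (fun v hv => Word.ncard_evenWords_hammingDist_eq_two hv)
    (fun v hv => ncard_neighbors_mem_setL_of_mem hCB hC hv)
    (fun v hv => ncard_neighbors_mem_setL_of_notMem hCB hC hv)
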